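/- Let R = ℂ[x₀,…,x₅]/(x₀²,…,x₅²), let ζ ≠ ζ′ be complex numbers with ζ³ = ζ′³ = −1, and set p_ζ = (x₀ + ζx₁)(x₂ + ζx₃)(x₄ + ζx₅) and p_ζ′ = (x₀ + ζ′x₁)(x₂ + ζ′x₃)(x₄ + ζ′x₅) in R. If y ∈ R is the image of a homogeneous linear form and y·(p_ζ + p_ζ′) = 0 in R, then y = 0. -/

import Mathlib

/-!
Write `y = ∑ aᵢ xᵢ`. In `R` each `xᵢ² = 0` while the top monomial `x₀x₁x₂x₃x₄x₅` is nonzero, so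
multiplying `y (p_ζ + p_ζ')` by `x₃x₅` and by `x₂x₅` lands in the top degree with coefficients
`(a₁ + ζa₀) + (a₁ + ζ'a₀)` and `ζ(a₁ + ζa₀) + ζ'(a₁ + ζ'a₀)`. For `ζ ≠ ζ'` this Vandermonde system
forces `a₀ = a₁ = 0`, and the other two pairs of variables are symmetric to the first.
-/

open MvPolynomial

noncomputable section

/-- The Jacobian ideal of the Fermat cubic fourfold `x₀³ + ⋯ + x₅³`,
generated by the squares of the six variables. -/
def fermatJacIdeal : Ideal (MvPolynomial (Fin 6) ℂ) :=
  Ideal.span (Set.range fun i : Fin 6 => (X i : MvPolynomial (Fin 6) ℂ) ^ 2)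

/-- The Jacobian ring `R = ℂ[x₀,…,x₅]/(x₀²,…,x₅²)` of the Fermat cubic fourfold. -/
abbrev FermatJacRing := MvPolynomial (Fin 6) ℂ ⧸ fermatJacIdeal

/-- The quotient map `ℂ[x₀,…,x₅] → R`. -/
def fermatπ : MvPolynomial (Fin 6) ℂ →ₐ[ℂ] FermatJacRing :=
  Ideal.Quotient.mkₐ ℂ fermatJacIdeal

/-- The degree-`d` graded component of `R`. -/
def fermatDeg (d : ℕ) : Submodule ℂ FermatJacRing :=
  (homogeneousSubmodule (Fin 6) ℂ d).map fermatπ.toLinearMap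

/-- The class `p_ζ = (x₀+ζx₁)(x₂+ζx₃)(x₄+ζx₅)` in `R`. -/
def fermatPlaneClass (ζ : ℂ) : FermatJacRing :=
  fermatπ ((X 0 + C ζ * X 1) * (X 2 + C ζ * X 3) * (X 4 + C ζ * X 5))

section SquareZero

variable {A : Type*} [CommRing A] {u₀ u₁ v₀ v₁ t₀ t₁ : A}

-- Pair by pair: `(v₀ + z v₁)(s v₀ + r v₁) = (r + s z) v₀ v₁`, `(t₀ + z t₁) t₁ = t₀ t₁`, and then
-- `(a₀ u₀ + a₁ u₁)(u₀ + z u₁) = (a₁ + z a₀) u₀ u₁`; all other terms contain a square.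
theorem linear_mul_plane_mul_eq (hu₀ : u₀ * u₀ = 0) (hu₁ : u₁ * u₁ = 0) (hv₀ : v₀ * v₀ = 0)
    (hv₁ : v₁ * v₁ = 0) (ht₀ : t₀ * t₀ = 0) (ht₁ : t₁ * t₁ = 0) (a₀ a₁ b₀ b₁ c₀ c₁ z r s : A) :
    (a₀ * u₀ + a₁ * u₁ + b₀ * v₀ + b₁ * v₁ + c₀ * t₀ + c₁ * t₁) *
        ((u₀ + z * u₁) * (v₀ + z * v₁) * (t₀ + z * t₁)) * ((s * v₀ + r * v₁) * t₁) =
      (r + s * z) * (a₁ + z * a₀) * (u₀ * u₁ * v₀ * v₁ * t₀ * t₁) := by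
  grind

end SquareZero

theorem eq_zero_of_add_eq_zero_of_mul_add_mul_eq_zero {K : Type*} [CommRing K] [NoZeroDivisors K]
    {z w a₀ a₁ : K} (hzw : z ≠ w) (h₁ : (a₁ + z * a₀) + (a₁ + w * a₀) = 0)
    (h₂ : z * (a₁ + z * a₀) + w * (a₁ + w * a₀) = 0) : a₀ = 0 ∧ a₁ = 0 := by
  have hzw' : z - w ≠ 0 := sub_ne_zero.2 hzw
  have hz : a₁ + z * a₀ = 0 := by
    refine (mul_eq_zero.1 ?_).resolve_left hzw'
    linear_combination h₂ - w * h₁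
  have ha₀ : a₀ = 0 := by
    refine (mul_eq_zero.1 ?_).resolve_left hzw'
    linear_combination 2 * hz - h₁
  exact ⟨ha₀, by linear_combination hz - z * ha₀⟩

section PlanePair

variable {K A : Type*} [Field K] [CommRing A] [Algebra K A] {u₀ u₁ v₀ v₁ t₀ t₁ : A}

theorem coeffs_eq_zero_of_mul_planes_add_eq_zero (hu₀ : u₀ * u₀ = 0) (hu₁ : u₁ * u₁ = 0)
    (hv₀ : v₀ * v₀ = 0) (hv₁ : v₁ * v₁ = 0) (ht₀ : t₀ * t₀ = 0) (ht₁ : t₁ * t₁ = 0)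
    (hω : u₀ * u₁ * v₀ * v₁ * t₀ * t₁ ≠ 0) {z w : K} (hzw : z ≠ w) (a₀ a₁ b₀ b₁ c₀ c₁ : K)
    (h : (a₀ • u₀ + a₁ • u₁ + b₀ • v₀ + b₁ • v₁ + c₀ • t₀ + c₁ • t₁) *
      ((u₀ + z • u₁) * (v₀ + z • v₁) * (t₀ + z • t₁) +
        (u₀ + w • u₁) * (v₀ + w • v₁) * (t₀ + w • t₁)) = 0) :
    a₀ = 0 ∧ a₁ = 0 := by
  -- `y (p_z + p_w) (s v₀ + r v₁) t₁` is this scalar times `u₀u₁v₀v₁t₀t₁`.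
  have key : ∀ r s : K, (r + s * z) * (a₁ + z * a₀) + (r + s * w) * (a₁ + w * a₀) = 0 := by
    intro r s
    refine (smul_eq_zero.1 ?_).resolve_right hω
    simp only [Algebra.smul_def, map_add, map_mul] at h ⊢
    rw [add_mul, ← linear_mul_plane_mul_eq hu₀ hu₁ hv₀ hv₁ ht₀ ht₁,
      ← linear_mul_plane_mul_eq hu₀ hu₁ hv₀ hv₁ ht₀ ht₁, ← add_mul, ← mul_add, h, zero_mul]
  exact eq_zero_of_add_eq_zero_of_mul_add_mul_eq_zero hzw (by simpa using key 1 0)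
    (by simpa using key 0 1)

end PlanePair

theorem sum_smul_eq_zero_of_mul_planes_add_eq_zero {K A : Type*} [Field K] [CommRing A]
    [Algebra K A] {x : Fin 6 → A} (hx : ∀ i, x i * x i = 0) (hω : ∏ i, x i ≠ 0) {z w : K}
    (hzw : z ≠ w) (a : Fin 6 → K)
    (h : (∑ i, a i • x i) *
      ((x 0 + z • x 1) * (x 2 + z • x 3) * (x 4 + z • x 5) +
        (x 0 + w • x 1) * (x 2 + w • x 3) * (x 4 + w • x 5)) = 0) :
    ∑ i, a i • x i = 0 := by
  rw [Fin.prod_univ_six] at hω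
  rw [Fin.sum_univ_six] at h ⊢
  obtain ⟨h₀, h₁⟩ := coeffs_eq_zero_of_mul_planes_add_eq_zero (hx 0) (hx 1) (hx 2) (hx 3) (hx 4)
    (hx 5) hω hzw _ _ _ _ _ _ h
  obtain ⟨h₂, h₃⟩ := coeffs_eq_zero_of_mul_planes_add_eq_zero (hx 2) (hx 3) (hx 0) (hx 1) (hx 4)
    (hx 5) (by convert hω using 1; ring) hzw (a 2) (a 3) (a 0) (a 1) (a 4) (a 5)
    (by rw [← h]; simp only [Algebra.smul_def]; ring)
  obtain ⟨h₄, h₅⟩ := coeffs_eq_zero_of_mul_planes_add_eq_zero (hx 4) (hx 5) (hx 0) (hx 1) (hx 2)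
    (hx 3) (by convert hω using 1; ring) hzw (a 4) (a 5) (a 0) (a 1) (a 2) (a 3)
    (by rw [← h]; simp only [Algebra.smul_def]; ring)
  simp [h₀, h₁, h₂, h₃, h₄, h₅]

theorem prod_X_notMem_span_X_sq {σ R : Type*} [Fintype σ] [CommSemiring R] [Nontrivial R] :
    ∏ i, (X i : MvPolynomial σ R) ∉ Ideal.span (Set.range fun i => X i ^ 2) := by
  have hspan : Set.range (fun i => (X i : MvPolynomial σ R) ^ 2) =
      (fun s => monomial s (1 : R)) '' Set.range fun i => Finsupp.single i 2 := by
    rw [← Set.range_comp]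
    simp only [Function.comp_def, X_pow_eq_monomial]
  have hprod : ∏ i, (X i : MvPolynomial σ R) = monomial (∑ i, Finsupp.single i 1) 1 := by
    simp only [monomial_sum_one, X]
  classical
  rw [hspan, hprod, mem_ideal_span_monomial_image]
  simp [support_monomial, Finsupp.single_le_iff]

theorem fermatπ_X_mul_self (i : Fin 6) : fermatπ (X i) * fermatπ (X i) = 0 := by
  rw [← map_mul, ← pow_two, fermatπ, Ideal.Quotient.mkₐ_eq_mk, Ideal.Quotient.eq_zero_iff_mem]
  exact Ideal.subset_span ⟨i, rfl⟩

theorem prod_fermatπ_X_ne_zero : ∏ i, fermatπ (X i) ≠ 0 := by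
  rw [← map_prod, fermatπ, Ideal.Quotient.mkₐ_eq_mk, Ne, Ideal.Quotient.eq_zero_iff_mem]
  exact prod_X_notMem_span_X_sq

theorem fermatPlaneClass_eq (z : ℂ) :
    fermatPlaneClass z = (fermatπ (X 0) + z • fermatπ (X 1)) *
      (fermatπ (X 2) + z • fermatπ (X 3)) * (fermatπ (X 4) + z • fermatπ (X 5)) := by
  simp only [fermatPlaneClass, ← smul_eq_C_mul, map_mul, map_add, map_smul]

theorem exists_eq_sum_smul_of_mem_fermatDeg_one {y : FermatJacRing} (hy : y ∈ fermatDeg 1) :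
    ∃ a : Fin 6 → ℂ, y = ∑ i, a i • fermatπ (X i) := by
  rw [fermatDeg, homogeneousSubmodule_one_eq_span_X, Submodule.map_span, ← Set.range_comp,
    Submodule.mem_span_range_iff_exists_fun] at hy
  obtain ⟨a, rfl⟩ := hy
  exact ⟨a, rfl⟩

theorem fermat_linear_annihilating_sum_is_zero_general
    (ζ ζ' : ℂ) (hne : ζ ≠ ζ')
    (y : FermatJacRing) (hy : y ∈ fermatDeg 1)
    (h : y * (fermatPlaneClass ζ + fermatPlaneClass ζ') = 0) :
    y = 0 := by
  obtain ⟨a, rfl⟩ := exists_eq_sum_smul_of_mem_fermatDeg_one hy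
  rw [fermatPlaneClass_eq, fermatPlaneClass_eq] at h
  exact sum_smul_eq_zero_of_mul_planes_add_eq_zero fermatπ_X_mul_self prod_fermatπ_X_ne_zero hne a h

/-- If `y` is the image of a linear form and `y·(p_ζ + p_ζ') = 0` in
`R = ℂ[x₀,…,x₅]/(x₀²,…,x₅²)`, where `ζ ≠ ζ'` and `ζ³ = ζ'³ = -1`, then `y = 0`. -/
theorem fermat_linear_annihilating_sum_is_zero
    (ζ ζ' : ℂ) (hζ : ζ ^ 3 = -1) (hζ' : ζ' ^ 3 = -1) (hne : ζ ≠ ζ')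
    (y : FermatJacRing) (hy : y ∈ fermatDeg 1)
    (h : y * (fermatPlaneClass ζ + fermatPlaneClass ζ') = 0) :
    y = 0 :=
  fermat_linear_annihilating_sum_is_zero_general ζ ζ' hne y hy h
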